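/- Let μ = (μ_1,…,μ_N) ∈ {0,1}^N, let 1 ≤ m ≤ N, and let y ∈ P_μ. Then the number of subspaces z ∈ P that m-cover y equals q^{(m−1) − (μ_1+μ_2+⋯+μ_{m−1})} if μ_m = 0, and equals 0 if μ_m = 1. -/

import Mathlib

/-- `μ : Fin N → ℕ` (with values in `{0,1}`) is the location of the subspace `y`
with respect to the flag `x`. -/
def IsLocation {F H : Type*} [Field F] [AddCommGroup H] [Module F H] {N : ℕ}
    (x : Fin (N + 1) → Submodule F H) (y : Submodule F H) (μ : Fin N → ℕ) : Prop :=
  (∀ i, μ i ≤ 1) ∧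
    ∀ m : Fin N, Module.finrank F ↥(y ⊓ x m.succ) = ∑ i ∈ Finset.Iic m, μ i

/-- `y` covers `z` in the subspace lattice. -/
def Covers {F H : Type*} [Field F] [AddCommGroup H] [Module F H]
    (y z : Submodule F H) : Prop :=
  z ≤ y ∧ Module.finrank F ↥z + 1 = Module.finrank F ↥y

/-- `y` `m`-covers `z`: `y` covers `z` and the location of `y` is the location of `z`
plus the tuple with a `1` in coordinate `m` and `0` elsewhere. -/
def MCovers {F H : Type*} [Field F] [AddCommGroup H] [Module F H] {N : ℕ}
    (x : Fin (N + 1) → Submodule F H) (m : Fin N) (y z : Submodule F H) : Prop :=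
  Covers y z ∧ ∃ μ ν : Fin N → ℕ, IsLocation x y μ ∧ IsLocation x z ν ∧
    ∀ i, μ i = ν i + if i = m then 1 else 0

/-!
A subspace `z` covering `y` is `y ⊔ span {v}` for any `v ∈ z \ y`, and adjoining `v ∉ y` raises
`dim (y ∩ W)` by one exactly when `v ∈ W + y`. Hence `y ⊔ span {v}` is an `m`-cover of `y` iff
`μ_m = 0` and `v ∈ (x_{m+1} + y) \ (x_m + y)`. When `μ_m = 0` the two sums have dimensions
`b + 1` and `b := m + dim y - dim (y ∩ x_m)`, so there are `q^b (q - 1)` such vectors, and each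
cover `z` arises from exactly the `q^{dim y} (q - 1)` vectors of `z \ y`.
-/

open Module Submodule

theorem Set.ncard_eq_ncard_mul_of_fibers {α β : Type*} {s : Set α} {t : Set β} {f : α → β}
    {k : ℕ} (hs : s.Finite) (ht : t.Finite) (hf : Set.MapsTo f s t)
    (hfib : ∀ b ∈ t, (s ∩ f ⁻¹' {b}).ncard = k) : s.ncard = t.ncard * k := by
  classical
  rw [Set.ncard_eq_toFinset_card s hs, Set.ncard_eq_toFinset_card t ht,
    Finset.card_eq_sum_card_fiberwise (f := f) (t := ht.toFinset) (by simpa using hf)]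
  refine Finset.sum_const_nat fun b hb => ?_
  rw [← hfib b (by simpa using hb), ← Set.ncard_coe_finset]
  congr 1
  ext a
  simp

section Linear

variable {F H : Type*} [Field F] [AddCommGroup H] [Module F H]

theorem Submodule.ncard_sdiff_of_finrank_eq_succ [Finite F] [FiniteDimensional F H]
    {A B : Submodule F H} (hBA : B ≤ A) (h : finrank F A = finrank F B + 1) :
    ((A : Set H) \ B).ncard = Nat.card F ^ finrank F B * (Nat.card F - 1) := by
  have : Finite H := Module.finite_of_finite F
  rw [Set.ncard_sdiff hBA, ← Nat.card_coe_set_eq, ← Nat.card_coe_set_eq, SetLike.coe_sort_coe,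
    SetLike.coe_sort_coe, natCard_eq_pow_finrank (K := F) (V := A),
    natCard_eq_pow_finrank (K := F) (V := B), h, pow_succ, Nat.mul_sub_one]

open Classical in
theorem Submodule.finrank_sup_span_inf [FiniteDimensional F H] {y : Submodule F H} {v : H}
    (hv : v ∉ y) (W : Submodule F H) :
    finrank F ↥((y ⊔ span F {v}) ⊓ W) = finrank F ↥(y ⊓ W) + if v ∈ W ⊔ y then 1 else 0 := by
  have hsup := finrank_sup_add_finrank_inf_eq (y ⊔ span F {v}) W
  have hinf := finrank_sup_add_finrank_inf_eq y W
  rw [finrank_sup_span_singleton hv, sup_right_comm, sup_comm y W] at hsup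
  rw [sup_comm y W] at hinf
  split_ifs with hvW
  · rw [sup_eq_left.2 ((span_singleton_le_iff_mem v _).2 hvW)] at hsup
    omega
  · rw [finrank_sup_span_singleton hvW] at hsup
    omega

variable {y z : Submodule F H}

theorem Covers.exists_mem_notMem (hzy : Covers z y) : ∃ v ∈ z, v ∉ y :=
  SetLike.exists_of_lt <| lt_of_le_of_ne hzy.1 fun h => by
    have := hzy.2
    rw [h] at this
    omega

theorem Covers.eq_sup_span [FiniteDimensional F H] (hzy : Covers z y) {v : H} (hvz : v ∈ z)
    (hvy : v ∉ y) : z = y ⊔ span F {v} :=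
  (eq_of_le_of_finrank_le (sup_le hzy.1 ((span_singleton_le_iff_mem v z).2 hvz))
    (by rw [finrank_sup_span_singleton hvy, hzy.2])).symm

end Linear

theorem Fin.forall_succ_iff_le_iff {N : ℕ} {p : Fin (N + 1) → Prop} (hp : Monotone p)
    (h0 : ¬ p 0) (m : Fin N) :
    (∀ k : Fin N, p k.succ ↔ m ≤ k) ↔ p m.succ ∧ ¬ p m.castSucc := by
  constructor
  · intro h
    refine ⟨(h m).2 le_rfl, fun hm => ?_⟩
    rcases Fin.eq_zero_or_eq_succ m.castSucc with hm0 | ⟨k, hk⟩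
    · exact h0 (hm0 ▸ hm)
    · have hmk := (h k).1 (hk ▸ hm)
      have hk' := congrArg Fin.val hk
      simp only [Fin.val_castSucc, Fin.val_succ] at hk'
      rw [Fin.le_def] at hmk
      omega
  · rintro ⟨hm, hm'⟩ k
    refine ⟨fun hk => ?_, fun hmk => hp (Fin.succ_le_succ_iff.2 hmk) hm⟩
    by_contra hkm
    exact hm' (hp (Fin.succ_le_castSucc_iff.2 (not_le.1 hkm)) hk)

section Location

variable {F H : Type*} [Field F] [AddCommGroup H] [Module F H] {N : ℕ}
  {x : Fin (N + 1) → Submodule F H} {y z : Submodule F H} {μ : Fin N → ℕ} {m : Fin N}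

theorem IsLocation.finrank_inf_castSucc (hx0 : x 0 = ⊥) (hy : IsLocation x y μ) (m : Fin N) :
    finrank F ↥(y ⊓ x m.castSucc) = ∑ i ∈ Finset.Iio m, μ i := by
  rcases Fin.eq_zero_or_eq_succ m.castSucc with hm0 | ⟨k, hk⟩
  · have hIio : Finset.Iio m = ∅ := by
      ext i
      have := congrArg Fin.val hm0
      simp only [Fin.val_castSucc, Fin.val_zero] at this
      simp [Fin.lt_def, this]
    rw [hm0, hx0, inf_bot_eq, finrank_bot, hIio, Finset.sum_empty]
  · have hIic : Finset.Iic k = Finset.Iio m := by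
      have := congrArg Fin.val hk
      simp only [Fin.val_castSucc, Fin.val_succ] at this
      ext i
      simp only [Finset.mem_Iic, Finset.mem_Iio, Fin.le_def, Fin.lt_def]
      omega
    rw [hk, hy.2 k, hIic]

theorem IsLocation.finrank_inf_succ (hx0 : x 0 = ⊥) (hy : IsLocation x y μ) (m : Fin N) :
    finrank F ↥(y ⊓ x m.succ) = finrank F ↥(y ⊓ x m.castSucc) + μ m := by
  rw [hy.2 m, hy.finrank_inf_castSucc hx0, ← Finset.Iio_insert,
    Finset.sum_insert Finset.notMem_Iio_self, add_comm]

theorem IsLocation.unique (hx0 : x 0 = ⊥) {ν : Fin N → ℕ} (hμ : IsLocation x y μ)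
    (hν : IsLocation x y ν) : μ = ν :=
  funext fun m => by
    have := hμ.finrank_inf_succ hx0 m
    have := hν.finrank_inf_succ hx0 m
    omega

theorem mcovers_iff (hx0 : x 0 = ⊥) (hy : IsLocation x y μ) :
    MCovers x m z y ↔ Covers z y ∧ IsLocation x z (μ + Pi.single m 1) := by
  constructor
  · rintro ⟨hzy, ν, μ', hz, hy', hνμ'⟩
    obtain rfl := hy'.unique hx0 hy
    refine ⟨hzy, ?_⟩
    convert hz using 1
    funext i
    simp [hνμ' i, Pi.single_apply]
  · rintro ⟨hzy, hz⟩
    exact ⟨hzy, _, μ, hz, hy, fun i => by simp [Pi.single_apply]⟩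

theorem isLocation_sup_span_iff [FiniteDimensional F H] (hx0 : x 0 = ⊥) (hx : Monotone x)
    (hy : IsLocation x y μ) {v : H} (hv : v ∉ y) :
    IsLocation x (y ⊔ span F {v}) (μ + Pi.single m 1) ↔
      μ m = 0 ∧ v ∈ x m.succ ⊔ y ∧ v ∉ x m.castSucc ⊔ y := by
  have hbound : (∀ i, (μ + Pi.single m 1 : Fin N → ℕ) i ≤ 1) ↔ μ m = 0 := by
    refine ⟨fun h => by simpa using h m, fun hμ i => ?_⟩
    rcases eq_or_ne i m with rfl | hi
    · simp [hμ]
    · simpa [hi] using hy.1 i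
  have hdims : (∀ k : Fin N, finrank F ↥((y ⊔ span F {v}) ⊓ x k.succ) =
      ∑ i ∈ Finset.Iic k, (μ + Pi.single m 1 : Fin N → ℕ) i) ↔
      ∀ k : Fin N, v ∈ x k.succ ⊔ y ↔ m ≤ k := by
    refine forall_congr' fun k => ?_
    simp only [finrank_sup_span_inf hv, hy.2 k, Pi.add_apply, Finset.sum_add_distrib,
      Finset.sum_pi_single', Finset.mem_Iic]
    split_ifs <;> simp_all
  rw [IsLocation, hbound, hdims, Fin.forall_succ_iff_le_iff
    (fun i j hij h => sup_le_sup_right (hx hij) y h) (by simpa [hx0] using hv)]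

theorem mcovers_sup_span_iff [FiniteDimensional F H] (hx0 : x 0 = ⊥) (hx : Monotone x)
    (hy : IsLocation x y μ) {v : H} (hv : v ∉ y) :
    MCovers x m (y ⊔ span F {v}) y ↔ μ m = 0 ∧ v ∈ x m.succ ⊔ y ∧ v ∉ x m.castSucc ⊔ y := by
  rw [mcovers_iff hx0 hy, isLocation_sup_span_iff hx0 hx hy hv]
  exact and_iff_right ⟨le_sup_left, (finrank_sup_span_singleton hv).symm⟩

theorem IsLocation.eq_zero_of_mcovers [FiniteDimensional F H] (hx0 : x 0 = ⊥) (hx : Monotone x)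
    (hy : IsLocation x y μ) (hz : MCovers x m z y) : μ m = 0 := by
  obtain ⟨v, hvz, hvy⟩ := hz.1.exists_mem_notMem
  have hzv := hz.1.eq_sup_span hvz hvy
  rw [hzv, mcovers_sup_span_iff hx0 hx hy hvy] at hz
  exact hz.1

theorem MCovers.sdiff_inter_preimage_eq [FiniteDimensional F H] (hx0 : x 0 = ⊥)
    (hx : Monotone x) (hy : IsLocation x y μ) (hz : MCovers x m z y) :
    ((x m.succ ⊔ y : Submodule F H) \ (x m.castSucc ⊔ y : Submodule F H) : Set H) ∩
      (fun v => y ⊔ span F {v}) ⁻¹' {z} = (z : Set H) \ y := by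
  ext v
  simp only [Set.mem_inter_iff, Set.mem_sdiff, Set.mem_preimage, Set.mem_singleton_iff,
    SetLike.mem_coe]
  constructor
  · rintro ⟨⟨-, hvB⟩, rfl⟩
    exact ⟨mem_sup_right (mem_span_singleton_self v), fun h => hvB (mem_sup_right h)⟩
  · rintro ⟨hvz, hvy⟩
    have hzv := hz.1.eq_sup_span hvz hvy
    rw [hzv, mcovers_sup_span_iff hx0 hx hy hvy] at hz
    exact ⟨hz.2, hzv.symm⟩

theorem ncard_mcovers [Finite F] [FiniteDimensional F H] (hx0 : x 0 = ⊥) (hx : Monotone x)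
    (hrank : ∀ i, finrank F ↥(x i) = i) (hy : IsLocation x y μ) (hμ : μ m = 0) :
    {z | MCovers x m z y}.ncard = Nat.card F ^ ((m : ℕ) - finrank F ↥(y ⊓ x m.castSucc)) := by
  have : Finite H := Module.finite_of_finite F
  have : Finite (Submodule F H) := Finite.of_injective _ SetLike.coe_injective
  set q := Nat.card F
  set s := finrank F ↥(y ⊓ x m.castSucc)
  have hs : s ≤ m := (finrank_mono inf_le_right).trans_eq (hrank _)
  have hsucc := finrank_sup_add_finrank_inf_eq (x m.succ) y
  have hcast := finrank_sup_add_finrank_inf_eq (x m.castSucc) y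
  rw [inf_comm, hy.finrank_inf_succ hx0, hμ, hrank, Fin.val_succ] at hsucc
  rw [inf_comm, hrank, Fin.val_castSucc] at hcast
  have hdim_cast : finrank F ↥(x m.castSucc ⊔ y) = (m - s) + finrank F y := by omega
  have hdim_succ : finrank F ↥(x m.succ ⊔ y) = finrank F ↥(x m.castSucc ⊔ y) + 1 := by omega
  have hcount := Set.ncard_eq_ncard_mul_of_fibers (f := fun v => y ⊔ span F {v})
    (s := ((x m.succ ⊔ y : Submodule F H) : Set H) \ (x m.castSucc ⊔ y : Submodule F H))
    (k := q ^ finrank F y * (q - 1)) (Set.toFinite _) (Set.toFinite {z | MCovers x m z y})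
    (fun v hv => (mcovers_sup_span_iff hx0 hx hy fun h => hv.2 (mem_sup_right h)).2
      ⟨hμ, hv.1, hv.2⟩)
    (fun z hz => by
      rw [hz.sdiff_inter_preimage_eq hx0 hx hy,
        ncard_sdiff_of_finrank_eq_succ hz.1.1 hz.1.2.symm])
  rw [ncard_sdiff_of_finrank_eq_succ (sup_le_sup_right (hx (Fin.castSucc_le_succ m)) y)
    hdim_succ, hdim_cast, pow_add, mul_assoc] at hcount
  have hq : 0 < q ^ finrank F y * (q - 1) :=
    Nat.mul_pos (Nat.pow_pos Nat.card_pos) (Nat.sub_pos_of_lt Finite.one_lt_card)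
  exact (Nat.eq_of_mul_eq_mul_right hq hcount).symm

end Location

theorem stmt2_general {F : Type*} [Field F] [Fintype F] {H : Type*} [AddCommGroup H] [Module F H]
    [FiniteDimensional F H] {N : ℕ}
    (x : Fin (N + 1) → Submodule F H) (hrank : ∀ i, Module.finrank F ↥(x i) = (i : ℕ))
    (hmono : StrictMono x)
    (μ : Fin N → ℕ) (m : Fin N) (y : Submodule F H) (hy : IsLocation x y μ) :
    Set.ncard {z : Submodule F H | MCovers x m z y} =
      if μ m = 0 then Fintype.card F ^ ((m : ℕ) - ∑ i ∈ Finset.Iio m, μ i) else 0 := by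
  have hx0 : x 0 = ⊥ := finrank_eq_zero.1 (hrank 0)
  split_ifs with hμ
  · rw [ncard_mcovers hx0 hmono.monotone hrank hy hμ, hy.finrank_inf_castSucc hx0,
      Nat.card_eq_fintype_card]
  · have hempty : {z | MCovers x m z y} = ∅ :=
      Set.eq_empty_of_forall_notMem fun z hz => hμ (hy.eq_zero_of_mcovers hx0 hmono.monotone hz)
    rw [hempty, Set.ncard_empty]

/-- The number of subspaces that `m`-cover `y ∈ P_μ` is `q^((m-1) - (μ_1+⋯+μ_{m-1}))`
if `μ_m = 0`, and `0` if `μ_m = 1`. -/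
theorem stmt2 {F : Type*} [Field F] [Fintype F] {H : Type*} [AddCommGroup H] [Module F H]
    [FiniteDimensional F H] {N : ℕ} (hN : 1 ≤ N) (hdim : Module.finrank F H = N)
    (x : Fin (N + 1) → Submodule F H) (hrank : ∀ i, Module.finrank F ↥(x i) = (i : ℕ))
    (hmono : StrictMono x)
    (μ : Fin N → ℕ) (m : Fin N) (y : Submodule F H) (hy : IsLocation x y μ) :
    Set.ncard {z : Submodule F H | MCovers x m z y} =
      if μ m = 0 then Fintype.card F ^ ((m : ℕ) - ∑ i ∈ Finset.Iio m, μ i) else 0 :=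
  stmt2_general x hrank hmono μ m y hy
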